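/- Let w be a string of length n and let 0 ≤ i ≤ j ≤ n−1 with j − i odd (so w[i..j] has even length). Define E[c] = c + MEPal_w[c]/2 − 1 if MEPal_w[c] > 0 and E[c] = c otherwise, for c ∈ [0..n−1]. Suppose w[i..j] has a nonempty even-length palindromic suffix, and let c_s = j + 1 − ℓ_s/2 be the center of its longest even-length palindromic suffix, where ℓ_s is that suffix's length. Let m = (i+j+1)/2. Then m ≤ c_s ≤ j, and: (1) E[k] < j for every k with m ≤ k < c_s; (2) E[c_s] ≥ j. -/

import Mathlib

/-- The factor `w[i..j]` of `w`, from position `i` to position `j` inclusive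
(the empty string when `i > j`). -/
def factor {α : Type*} (w : List α) (i j : ℕ) : List α :=
  (w.drop i).take (j + 1 - i)

/-- A string is a palindrome if it equals its reverse. -/
def IsPal {α : Type*} (l : List α) : Prop := l.reverse = l

/-- `MEPal w c` is the length of the longest palindromic factor of `w` of the
form `w[c-r..c+r-1]` (with `r ≥ 0`, `c - r ≥ 0`, `c + r ≤ |w|`). -/
noncomputable def MEPal {α : Type*} (w : List α) (c : ℕ) : ℕ :=
  2 * sSup {r : ℕ | r ≤ c ∧ c + r ≤ w.length ∧ IsPal (factor w (c - r) (c + r - 1))}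

/-- The maximal even-palindrome array of `w`. -/
noncomputable def MEPalArr {α : Type*} (w : List α) : List ℕ :=
  (List.range w.length).map (MEPal w)

/-- `LEPal w j` is the length of the longest even-length palindromic suffix of
the prefix `w[0..j]`. -/
noncomputable def LEPal {α : Type*} (w : List α) (j : ℕ) : ℕ :=
  sSup {ℓ : ℕ | ℓ % 2 = 0 ∧ ℓ ≤ j + 1 ∧ IsPal (factor w (j + 1 - ℓ) j)}

/-- The longest even-palindrome array of `w`. -/
noncomputable def LEPalArr {α : Type*} (w : List α) : List ℕ :=
  (List.range w.length).map (LEPal w)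

/-- A positive integer `p` is a period of `u` if `u[i] = u[i+p]` for all
`0 ≤ i ≤ |u| - p - 1`. -/
def HasPeriod {α : Type*} (u : List α) (p : ℕ) : Prop :=
  ∀ i, i + p < u.length → u[i]? = u[i + p]?

/-!
The even palindromes centered at `c` have radii forming the interval `[1, MEPal w c / 2]`,
since trimming a palindrome symmetrically leaves a palindrome. Hence `E[k] ≥ j` for `k < j`
says exactly that `w[2k-j-1..j]` is a palindrome, i.e. an even palindromic suffix of `w[i..j]`
of length `2(j+1-k)`; for `m ≤ k < c_s` this is longer than the longest one, and for `k = c_s`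
it is that longest suffix itself.
-/

section Palindromes

variable {α : Type*}

lemma IsPal.drop_take {u : List α} (h : IsPal u) (d : ℕ) :
    IsPal ((u.drop d).take (u.length - 2 * d)) := by
  unfold IsPal at *
  rcases le_or_gt u.length (2 * d) with hL | hL
  · simp [Nat.sub_eq_zero_of_le hL]
  · rw [List.reverse_take, List.length_drop, List.reverse_drop, h, List.drop_take]
    congr 1
    · omega
    · congr 1
      omega

lemma factor_drop_take (w : List α) {a b d n : ℕ} (hn : 0 < n) (hdn : d + n ≤ b + 1 - a) :
    ((factor w a b).drop d).take n = factor w (a + d) (a + d + n - 1) := by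
  simp only [factor, List.drop_take, List.drop_drop, List.take_take]
  congr 1
  omega

lemma length_factor (w : List α) {a b : ℕ} (h : b < w.length) :
    (factor w a b).length = b + 1 - a := by
  simp only [factor, List.length_take, List.length_drop]
  omega

def evenPalRadii (w : List α) (c : ℕ) : Set ℕ :=
  {r | r ≤ c ∧ c + r ≤ w.length ∧ IsPal (factor w (c - r) (c + r - 1))}

noncomputable def evenPalEnd (w : List α) (c : ℕ) : ℕ :=
  if 0 < MEPal w c then c + MEPal w c / 2 - 1 else c

variable {w : List α} {c r : ℕ}

lemma MEPal_eq_two_mul_sSup (w : List α) (c : ℕ) :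
    MEPal w c = 2 * sSup (evenPalRadii w c) := rfl

lemma bddAbove_evenPalRadii (w : List α) (c : ℕ) : BddAbove (evenPalRadii w c) :=
  ⟨c, fun _ hr => hr.1⟩

lemma evenPalRadii.mono {r' : ℕ} (hr : 0 < r) (hrr' : r ≤ r') (h : r' ∈ evenPalRadii w c) :
    r ∈ evenPalRadii w c := by
  obtain ⟨hr'c, hr'w, hpal⟩ := h
  refine ⟨hrr'.trans hr'c, by omega, ?_⟩
  have hshrink := hpal.drop_take (r' - r)
  rw [length_factor w (by omega), factor_drop_take w (by omega) (by omega)] at hshrink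
  convert hshrink using 2 <;> omega

lemma mem_evenPalRadii_iff (hr : 0 < r) : r ∈ evenPalRadii w c ↔ 2 * r ≤ MEPal w c := by
  rw [MEPal_eq_two_mul_sSup]
  refine ⟨fun h => by linarith [le_csSup (bddAbove_evenPalRadii w c) h], fun h => ?_⟩
  rcases (evenPalRadii w c).eq_empty_or_nonempty with hempty | hne
  · rw [hempty, csSup_empty, Nat.bot_eq_zero] at h
    omega
  · exact evenPalRadii.mono hr (by omega) (Nat.sSup_mem hne (bddAbove_evenPalRadii w c))

lemma le_evenPalEnd_iff {j : ℕ} (hcj : c < j) :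
    j ≤ evenPalEnd w c ↔ j + 1 - c ∈ evenPalRadii w c := by
  rw [mem_evenPalRadii_iff (by omega), evenPalEnd, MEPal_eq_two_mul_sSup]
  split_ifs <;> omega

lemma add_sub_one_le_evenPalEnd (hr : 0 < r) (h : r ∈ evenPalRadii w c) :
    c + r - 1 ≤ evenPalEnd w c := by
  rw [mem_evenPalRadii_iff hr, MEPal_eq_two_mul_sSup] at h
  rw [evenPalEnd, MEPal_eq_two_mul_sSup, if_pos (by omega)]
  omega

lemma mem_evenPalRadii_iff_isPal_suffix {j : ℕ} (hj : j < w.length) (hcr : c + r = j + 1) :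
    r ∈ evenPalRadii w c ↔ 2 * r ≤ j + 1 ∧ IsPal (factor w (j + 1 - 2 * r) j) := by
  obtain rfl : c = j + 1 - r := by omega
  have hstart : j + 1 - r - r = j + 1 - 2 * r := by omega
  refine ⟨fun ⟨hrc, _, hpal⟩ => ⟨by omega, ?_⟩, fun ⟨hrj, hpal⟩ => ⟨by omega, by omega, ?_⟩⟩
  · rwa [hstart, show j + 1 - r + r - 1 = j by omega] at hpal
  · rwa [hstart, show j + 1 - r + r - 1 = j by omega]

end Palindromes

theorem stmt11_general {α : Type*} (w : List α) (i j : ℕ)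
    (hj : j < w.length) (hodd : (j - i) % 2 = 1)
    (E : ℕ → ℕ)
    (hE : ∀ c, E c = if 0 < MEPal w c then c + MEPal w c / 2 - 1 else c)
    (ℓs : ℕ) (hpos : 0 < ℓs) (heven : ℓs % 2 = 0) (hlen : ℓs ≤ j + 1 - i)
    (hpal : IsPal (factor w (j + 1 - ℓs) j))
    (hmax : ∀ ℓ : ℕ, ℓ % 2 = 0 → ℓ ≤ j + 1 - i →
      IsPal (factor w (j + 1 - ℓ) j) → ℓ ≤ ℓs) :
    (i + j + 1) / 2 ≤ j + 1 - ℓs / 2 ∧ j + 1 - ℓs / 2 ≤ j ∧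
    (∀ k, (i + j + 1) / 2 ≤ k → k < j + 1 - ℓs / 2 → E k < j) ∧
    j ≤ E (j + 1 - ℓs / 2) := by
  obtain rfl : E = evenPalEnd w := funext hE
  have hℓs : 2 * (ℓs / 2) = ℓs := Nat.two_mul_div_two_of_even (Nat.even_iff.2 heven)
  have hsuffix : ℓs / 2 ∈ evenPalRadii w (j + 1 - ℓs / 2) :=
    (mem_evenPalRadii_iff_isPal_suffix hj (by omega)).2 ⟨by omega, by rwa [hℓs]⟩
  refine ⟨by omega, by omega, fun k hmk hks => ?_, ?_⟩
  · by_contra! hjk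
    rw [le_evenPalEnd_iff (by omega)] at hjk
    obtain ⟨-, hlonger⟩ := (mem_evenPalRadii_iff_isPal_suffix hj (by omega)).1 hjk
    have := hmax _ (by omega) (by omega) hlonger
    omega
  · have := add_sub_one_le_evenPalEnd (by omega) hsuffix
    omega

theorem stmt11 {α : Type*} (w : List α) (i j : ℕ)
    (hij : i ≤ j) (hj : j < w.length) (hodd : (j - i) % 2 = 1)
    (E : ℕ → ℕ)
    (hE : ∀ c, E c = if 0 < MEPal w c then c + MEPal w c / 2 - 1 else c)
    (ℓs : ℕ) (hpos : 0 < ℓs) (heven : ℓs % 2 = 0) (hlen : ℓs ≤ j + 1 - i)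
    (hpal : IsPal (factor w (j + 1 - ℓs) j))
    (hmax : ∀ ℓ : ℕ, ℓ % 2 = 0 → ℓ ≤ j + 1 - i →
      IsPal (factor w (j + 1 - ℓ) j) → ℓ ≤ ℓs) :
    (i + j + 1) / 2 ≤ j + 1 - ℓs / 2 ∧ j + 1 - ℓs / 2 ≤ j ∧
    (∀ k, (i + j + 1) / 2 ≤ k → k < j + 1 - ℓs / 2 → E k < j) ∧
    j ≤ E (j + 1 - ℓs / 2) :=
  stmt11_general w i j hj hodd E hE ℓs hpos heven hlen hpal hmax
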